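/- Let (K, t, c, λ) be a weak mixed distributive law in Cat with splitting Θ = σ ∘ π, π ∘ σ = 1_a of the canonical idempotent Θ on tc. Define γ : a ⟶ ca as γ = (c ◁ π) ∘ (λ ▷ c) ∘ (t ◁ δ) ∘ σ. Then γ is a coaction of the comonad c on a: (ε ▷ a) ∘ γ = id_a and (δ ▷ a) ∘ γ = (c ◁ γ) ∘ γ. -/

import Mathlib

open CategoryTheory

universe v₁ u₁ v₂ u₂

variable {K : Type u₁} [Category.{v₁} K]

/-- A weak mixed distributive law `λ : tc ⟶ ct` between a monad `t` and a comonad `c`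
on a category `K`, satisfying the four axioms of Böhm–Lack–Street, stated componentwise. -/
structure WeakMixedDistLaw (t : CategoryTheory.Monad K) (c : CategoryTheory.Comonad K) where
  l : (c.toFunctor ⋙ t.toFunctor) ⟶ (t.toFunctor ⋙ c.toFunctor)
  mul_compat : ∀ X : K, t.μ.app (c.obj X) ≫ l.app X =
    t.map (l.app X) ≫ l.app (t.obj X) ≫ c.map (t.μ.app X)
  comul_compat : ∀ X : K, t.map (c.δ.app X) ≫ l.app (c.obj X) ≫ c.map (l.app X) =
    l.app X ≫ c.δ.app (t.obj X)
  weak_unit : ∀ X : K, t.η.app (c.obj X) ≫ l.app X =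
    c.δ.app X ≫ c.map (t.η.app (c.obj X)) ≫ c.map (l.app X) ≫ c.map (c.ε.app (t.obj X))
  weak_counit : ∀ X : K, l.app X ≫ c.ε.app (t.obj X) =
    t.map (t.η.app (c.obj X)) ≫ t.map (l.app X) ≫ t.map (c.ε.app (t.obj X)) ≫ t.μ.app X

/-!
Write `κ = (λ c) ∘ (t δ) : tc ⟶ ctc`. The axiom relating `λ` to `δ`, together with coassociativity
of `δ`, says that `κ` is coassociative, i.e. a coaction of `c` on `tc` without the counit law.
For such a `κ` the map `Θ = ε ∘ κ` satisfies `κ ∘ Θ = κ`, by naturality of `ε` and the counit law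
`ε c ∘ δ = 1`. Transporting `κ` along a splitting of `Θ` then gives a genuine coaction: the counit
law becomes `π ∘ Θ ∘ σ = 1`, and coassociativity survives because the `Θ = σ ∘ π` appearing in the
middle of `c γ ∘ γ` is absorbed by `κ`.
-/

namespace CategoryTheory.Comonad

variable (c : Comonad K) {E A : K} {κ : E ⟶ c.obj E}

theorem coassoc_comp_counit_comp (hκ : κ ≫ c.δ.app E = κ ≫ c.map κ) :
    κ ≫ c.ε.app E ≫ κ = κ := by
  rw [← c.counit_naturality (f := κ), ← reassoc_of% hκ, c.left_counit, Category.comp_id]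

theorem retract_coaction_counit {π : E ⟶ A} {σ : A ⟶ E} (hsec : σ ≫ π = 𝟙 A)
    (hsplit : π ≫ σ = κ ≫ c.ε.app E) :
    (σ ≫ κ ≫ c.map π) ≫ c.ε.app A = 𝟙 A := by
  calc (σ ≫ κ ≫ c.map π) ≫ c.ε.app A = σ ≫ (κ ≫ c.ε.app E) ≫ π := by
        simp only [Category.assoc, c.counit_naturality]
    _ = 𝟙 A := by rw [← hsplit, Category.assoc, reassoc_of% hsec, hsec]

theorem retract_coaction_coassoc {π : E ⟶ A} {σ : A ⟶ E}
    (hκ : κ ≫ c.δ.app E = κ ≫ c.map κ) (hsplit : π ≫ σ = κ ≫ c.ε.app E) :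
    (σ ≫ κ ≫ c.map π) ≫ c.δ.app A = (σ ≫ κ ≫ c.map π) ≫ c.map (σ ≫ κ ≫ c.map π) := by
  have hΘκ : π ≫ σ ≫ κ = κ := by
    rw [reassoc_of% hsplit, c.coassoc_comp_counit_comp hκ]
  calc (σ ≫ κ ≫ c.map π) ≫ c.δ.app A = σ ≫ (κ ≫ c.δ.app E) ≫ c.map (c.map π) := by
        simp only [Category.assoc, c.delta_naturality]
    _ = σ ≫ κ ≫ c.map (π ≫ σ ≫ κ) ≫ c.map (c.map π) := by
        rw [hκ, hΘκ, Category.assoc]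
    _ = (σ ≫ κ ≫ c.map π) ≫ c.map (σ ≫ κ ≫ c.map π) := by
        simp only [Functor.map_comp, Category.assoc]

end CategoryTheory.Comonad

namespace WeakMixedDistLaw

variable {t : Monad K} {c : Comonad K} (W : WeakMixedDistLaw t c)

def coaction (X : K) : t.obj (c.obj X) ⟶ c.obj (t.obj (c.obj X)) :=
  t.map (c.δ.app X) ≫ W.l.app (c.obj X)

theorem coaction_coassoc (X : K) :
    W.coaction X ≫ c.δ.app _ = W.coaction X ≫ c.map (W.coaction X) := by
  have hl : t.map (c.map (c.δ.app X)) ≫ W.l.app (c.obj (c.obj X)) =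
      W.l.app (c.obj X) ≫ c.map (t.map (c.δ.app X)) :=
    W.l.naturality (c.δ.app X)
  calc W.coaction X ≫ c.δ.app _
      = t.map (c.δ.app X ≫ c.δ.app (c.obj X)) ≫ W.l.app (c.obj (c.obj X)) ≫
          c.map (W.l.app (c.obj X)) := by
        rw [coaction, Category.assoc, ← W.comul_compat, Functor.map_comp_assoc]
    _ = W.coaction X ≫ c.map (W.coaction X) := by
        rw [← c.coassoc, Functor.map_comp_assoc, reassoc_of% hl]
        simp only [coaction, Functor.map_comp, Category.assoc]

end WeakMixedDistLaw

/-- Through a splitting of the canonical idempotent on tc, the 2-cell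
γ = (c π) ∘ (λ c) ∘ (t δ) ∘ σ is a coaction of the comonad c on a. -/
theorem canonical_coaction (t : CategoryTheory.Monad K) (c : CategoryTheory.Comonad K)
    (W : WeakMixedDistLaw t c) (a : K ⥤ K) (π : (c.toFunctor ⋙ t.toFunctor) ⟶ a) (σ : a ⟶ (c.toFunctor ⋙ t.toFunctor))
    (hsec : σ ≫ π = 𝟙 a)
    (hsplit : ∀ X : K, π.app X ≫ σ.app X =
      t.map (c.δ.app X) ≫ W.l.app (c.obj X) ≫ c.ε.app (t.obj (c.obj X))) :
    (∀ X : K, (σ.app X ≫ t.map (c.δ.app X) ≫ W.l.app (c.obj X) ≫ c.map (π.app X)) ≫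
      c.ε.app (a.obj X) = 𝟙 (a.obj X)) ∧
    (∀ X : K, (σ.app X ≫ t.map (c.δ.app X) ≫ W.l.app (c.obj X) ≫ c.map (π.app X)) ≫
      c.δ.app (a.obj X) =
      (σ.app X ≫ t.map (c.δ.app X) ≫ W.l.app (c.obj X) ≫ c.map (π.app X)) ≫
        c.map (σ.app X ≫ t.map (c.δ.app X) ≫ W.l.app (c.obj X) ≫ c.map (π.app X))) := by
  have hsplit' (X : K) : π.app X ≫ σ.app X = W.coaction X ≫ c.ε.app _ := by
    rw [hsplit, WeakMixedDistLaw.coaction, Category.assoc]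
  refine ⟨fun X => ?_, fun X => ?_⟩
  · have hsecX : σ.app X ≫ π.app X = 𝟙 (a.obj X) := NatTrans.congr_app hsec X
    simpa only [WeakMixedDistLaw.coaction, Category.assoc] using
      c.retract_coaction_counit hsecX (hsplit' X)
  · simpa only [WeakMixedDistLaw.coaction, Category.assoc] using
      c.retract_coaction_coassoc (W.coaction_coassoc X) (hsplit' X)
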